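/- Let N ≥ 8 be even and set H = N(6N + N² − 12)/24. Then N(N−3) + H + (N(N−1)/2)²/H = N(228N² − 1152N + 36N³ + N⁴ + 1152)/(24(6N + N² − 12)), and for N > 8 this exceeds both N(15N−22)/8 and 2(N−1)². -/

import Mathlib

theorem stmt16 (N : ℕ) (hEven : Even N) (hN : 8 ≤ N)
    (H : ℝ) (hH : H = (N : ℝ) * (6 * N + N ^ 2 - 12) / 24) :
    (N : ℝ) * (N - 3) + H + ((N : ℝ) * (N - 1) / 2) ^ 2 / H
      = (N : ℝ) * (228 * N ^ 2 - 1152 * N + 36 * N ^ 3 + N ^ 4 + 1152)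
          / (24 * (6 * N + N ^ 2 - 12)) ∧
    (8 < N →
      (N : ℝ) * (228 * N ^ 2 - 1152 * N + 36 * N ^ 3 + N ^ 4 + 1152)
          / (24 * (6 * N + N ^ 2 - 12)) > (N : ℝ) * (15 * N - 22) / 8 ∧
      (N : ℝ) * (228 * N ^ 2 - 1152 * N + 36 * N ^ 3 + N ^ 4 + 1152)
          / (24 * (6 * N + N ^ 2 - 12)) > 2 * ((N : ℝ) - 1) ^ 2) := by
  have hx : (8 : ℝ) ≤ (N : ℝ) := by exact_mod_cast hN
  set x := (N : ℝ) with hxdef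
  have hden : 6 * x + x ^ 2 - 12 > 0 := by nlinarith
  have hHpos : H > 0 := by rw [hH]; positivity
  constructor
  · rw [hH]
    field_simp [hden.ne', (ne_of_gt (by linarith) : x ≠ 0), (ne_of_gt (by nlinarith) : x * (6 + x) - 12 ≠ 0)]
    ring
  · intro hN9
    have hx9 : (9 : ℝ) ≤ x := by have : 9 ≤ N := hN9; rw [hxdef]; exact_mod_cast this
    have hd : (0:ℝ) < 24 * (6 * x + x ^ 2 - 12) := by nlinarith
    constructor
    · rw [gt_iff_lt, div_lt_div_iff₀ (by norm_num) hd]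
      nlinarith [sq_nonneg x, sq_nonneg (x-9), sq_nonneg (x^2-9*x)]
    · rw [gt_iff_lt, lt_div_iff₀ hd]
      nlinarith [sq_nonneg (x-9), sq_nonneg (x^2-9*x)]
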